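/- In a Brauer graph whose underlying graph is a tree with n edges, every Green walk visits each half-edge, i.e. the Green walk bijection g = σ∘ι acts transitively on the set of half-edges, so there is a unique Green walk and it has period 2n. -/
import Mathlib

universe u w

theorem green_aux : ∀ (n : ℕ) (V : Type u) (E : Type w) [Fintype V] [Fintype E]
    (s : E → V) (ι σ : E → E),
    Fintype.card V = n →
    Function.Involutive ι → (∀ e, ι e ≠ e) → Function.Bijective σ →
    (∀ e, s (σ e) = s e) → (∀ e e', s e = s e' → ∃ m : ℕ, σ^[m] e = e') →
    (∀ u v : V, Relation.ReflTransGen (fun a b => ∃ e, s e = a ∧ s (ι e) = b) u v) →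
    Fintype.card E = 2 * (Fintype.card V - 1) →
    ∀ e e' : E, ∃ k : ℕ, (σ ∘ ι)^[k] e = e' := by
  intro n
  induction n using Nat.strong_induction_on with
  | _ n IH =>
  intro V E _ _ s ι σ hn hinv hfree hσ hfib hcyc hconn htree e₀ e₀'
  classical
  by_cases hV1 : Fintype.card V ≤ 1
  · have hE0 : Fintype.card E = 0 := by omega
    have : 0 < Fintype.card E := Fintype.card_pos_iff.mpr ⟨e₀⟩
    omega
  -- every vertex has a half-edge
  have hdeg : ∀ x : V, ∃ e, s e = x := by
    intro x
    obtain ⟨y, hy⟩ := Fintype.exists_ne_of_one_lt_card (by omega) x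
    rcases (hconn y x).cases_tail with hxy | ⟨c, _, e, he1, he2⟩
    · exact absurd hxy.symm hy
    · exact ⟨ι e, he2⟩
  -- find a leaf
  have hsum : ∑ x : V, (Finset.univ.filter fun e => s e = x).card = Fintype.card E := by
    rw [← Finset.card_univ]
    exact (Finset.card_eq_sum_card_fiberwise (fun e _ => Finset.mem_univ (s e))).symm
  have hleaf : ∃ x : V, (Finset.univ.filter fun e => s e = x).card = 1 := by
    by_contra hcon
    push_neg at hcon
    have h2 : ∀ x : V, x ∈ (Finset.univ : Finset V) →
        2 ≤ (Finset.univ.filter fun e => s e = x).card := by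
      intro x _
      obtain ⟨e, he⟩ := hdeg x
      have h1 : 0 < (Finset.univ.filter fun e => s e = x).card :=
        Finset.card_pos.mpr ⟨e, by simp [he]⟩
      have := hcon x
      omega
    have hge := Finset.card_nsmul_le_sum Finset.univ _ 2 h2
    rw [hsum] at hge
    simp only [Finset.card_univ, smul_eq_mul] at hge
    omega
  obtain ⟨v, hv1⟩ := hleaf
  obtain ⟨h, hh⟩ := Finset.card_eq_one.mp hv1
  have hsh : s h = v := by
    have : h ∈ Finset.univ.filter fun e => s e = v := by
      rw [hh]; exact Finset.mem_singleton_self h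
    exact (Finset.mem_filter.mp this).2
  have hv : ∀ e, s e = v → e = h := by
    intro e he
    have : e ∈ Finset.univ.filter fun e => s e = v :=
      Finset.mem_filter.mpr ⟨Finset.mem_univ _, he⟩
    rw [hh] at this
    exact Finset.mem_singleton.mp this
  have hhι : ι h ≠ h := hfree h
  have hsιh : s (ι h) ≠ v := fun hc => hhι (hv _ hc)
  have hσh : σ h = h := hv _ ((hfib h).trans hsh)
  have hσιh_ne_h : σ (ι h) ≠ h := fun hc => hsιh (by rw [← hfib (ι h), hc, hsh])
  by_cases hV2 : Fintype.card V = 2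
  · -- base case : a single edge
    have hE2 : Fintype.card E = 2 := by omega
    have hmem : ∀ e : E, e = h ∨ e = ι h := by
      intro e
      by_contra hc
      push_neg at hc
      have hcard : ({e, h, ι h} : Finset E).card = 3 := by
        rw [Finset.card_insert_of_notMem (by simp [hc.1, hc.2]),
          Finset.card_insert_of_notMem (by simp [Ne.symm hhι])]
        simp
      have := Finset.card_le_univ ({e, h, ι h} : Finset E)
      rw [hcard] at this
      omega
    have hσιh : σ (ι h) = ι h := (hmem (σ (ι h))).resolve_left hσιh_ne_h
    have hgh : (σ ∘ ι) h = ι h := by show σ (ι h) = ι h; exact hσιh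
    have hgι : (σ ∘ ι) (ι h) = h := by show σ (ι (ι h)) = h; rw [hinv, hσh]
    rcases hmem e₀ with rfl | rfl <;> rcases hmem e₀' with rfl | rfl
    · exact ⟨0, rfl⟩
    · exact ⟨1, by rw [Function.iterate_one, hgh]⟩
    · exact ⟨1, by rw [Function.iterate_one, hgι]⟩
    · exact ⟨0, rfl⟩
  have hV3 : 3 ≤ Fintype.card V := by omega
  -- the neighbour of the leaf has degree ≥ 2
  have hx2 : ∃ x, s x = s (ι h) ∧ x ≠ ι h := by
    by_contra hcon
    push_neg at hcon
    have hreach : ∀ a u : V,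
        Relation.ReflTransGen (fun a b => ∃ e, s e = a ∧ s (ι e) = b) a u →
        (a = v ∨ a = s (ι h)) → (u = v ∨ u = s (ι h)) := by
      intro a u hau
      induction hau with
      | refl => exact id
      | @tail b c hab hstep ih =>
        intro ha
        obtain ⟨e, he1, he2⟩ := hstep
        rcases ih ha with hb | hb
        · right
          have he : e = h := hv e (hb ▸ he1)
          rw [← he2, he]
        · left
          have he : e = ι h := hcon e (he1.trans hb)
          rw [← he2, he, hinv, hsh]
    have hall : ∀ u : V, u = v ∨ u = s (ι h) :=
      fun u => hreach _ u (hconn _ u) (Or.inr rfl)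
    have hsub : (Finset.univ : Finset V) ⊆ {v, s (ι h)} := by
      intro u _
      rcases hall u with hu | hu <;> simp [hu]
    have := Finset.card_le_card hsub
    rw [Finset.card_univ] at this
    have h2 : ({v, s (ι h)} : Finset V).card ≤ 2 :=
      (Finset.card_insert_le _ _).trans (by simp)
    omega
  obtain ⟨x₂, hx₂s, hx₂ι⟩ := hx2
  have hσιh_ne : σ (ι h) ≠ ι h := by
    intro hc
    obtain ⟨m, hm⟩ := hcyc (ι h) x₂ hx₂s.symm
    rw [Function.iterate_fixed hc] at hm
    exact hx₂ι hm.symm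
  -- the contracted graph
  let E' := {e : E // e ≠ h ∧ e ≠ ι h}
  let V' := {x : V // x ≠ v}
  let s' : E' → V' := fun e => ⟨s e.1, fun hc => e.2.1 (hv _ hc)⟩
  let ι' : E' → E' := fun e => ⟨ι e.1,
    fun hc => e.2.2 (by rw [← hinv e.1, hc]),
    fun hc => e.2.1 (hinv.injective hc)⟩
  let σ' : E' → E' := fun e =>
    if hc : σ e.1 = ι h then ⟨σ (ι h), hσιh_ne_h, hσιh_ne⟩
    else ⟨σ e.1, fun h1 => e.2.1 (hv _ (by rw [← hfib e.1, h1, hsh])), hc⟩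
  have hσ'val : ∀ a : E', (σ' a).1 = if σ a.1 = ι h then σ (ι h) else σ a.1 := by
    intro a
    by_cases hc : σ a.1 = ι h
    · show (dite _ _ _ : E').1 = _
      rw [dif_pos hc, if_pos hc]
    · show (dite _ _ _ : E').1 = _
      rw [dif_neg hc, if_neg hc]
  have hι'val : ∀ a : E', (ι' a).1 = ι a.1 := fun a => rfl
  have hs'val : ∀ a : E', (s' a).1 = s a.1 := fun a => rfl
  -- cardinalities
  have hcardV' : Fintype.card V' = Fintype.card V - 1 := by
    show Fintype.card {x : V // x ≠ v} = _
    rw [Fintype.card_subtype, Finset.filter_ne', Finset.card_erase_of_mem (Finset.mem_univ v),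
      Finset.card_univ]
  have hcardE' : Fintype.card E' = Fintype.card E - 2 := by
    show Fintype.card {e : E // e ≠ h ∧ e ≠ ι h} = _
    rw [Fintype.card_subtype]
    have hfe : Finset.univ.filter (fun e : E => e ≠ h ∧ e ≠ ι h) = Finset.univ \ {h, ι h} := by
      ext e
      simp [not_or]
    rw [hfe, Finset.card_sdiff_of_subset (Finset.subset_univ _), Finset.card_univ,
      Finset.card_pair (Ne.symm hhι)]
  -- hypotheses for the contracted graph
  have hinv' : Function.Involutive ι' := fun e => Subtype.ext (hinv e.1)
  have hfree' : ∀ e : E', ι' e ≠ e := fun e hc => hfree e.1 (congrArg Subtype.val hc)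
  have hσ'inj : Function.Injective σ' := by
    intro a b hab
    have hval := congrArg Subtype.val hab
    rw [hσ'val, hσ'val] at hval
    by_cases ha : σ a.1 = ι h <;> by_cases hb : σ b.1 = ι h
    · exact Subtype.ext (hσ.injective (ha.trans hb.symm))
    · rw [if_pos ha, if_neg hb] at hval
      exact absurd (hσ.injective hval).symm b.2.2
    · rw [if_neg ha, if_pos hb] at hval
      exact absurd (hσ.injective hval) a.2.2
    · rw [if_neg ha, if_neg hb] at hval
      exact Subtype.ext (hσ.injective hval)
  have hσ'bij : Function.Bijective σ' := Finite.injective_iff_bijective.mp hσ'inj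
  have hfib' : ∀ e : E', s' (σ' e) = s' e := by
    intro e
    apply Subtype.ext
    rw [hs'val, hs'val, hσ'val]
    by_cases hc : σ e.1 = ι h
    · have h3 : s (σ e.1) = s e.1 := hfib e.1
      rw [hc] at h3
      rw [if_pos hc, hfib]
      exact h3
    · rw [if_neg hc]
      exact hfib e.1
  have hskip : ∀ m : ℕ, ∀ a b : E', σ^[m] a.1 = b.1 → ∃ k, σ'^[k] a = b := by
    intro m
    induction m using Nat.strong_induction_on with
    | _ m IH2 =>
    intro a b hab
    rcases m with _ | m
    · exact ⟨0, Subtype.ext hab⟩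
    · rw [Function.iterate_succ_apply] at hab
      by_cases hc : σ a.1 = ι h
      · have ha' : (σ' a).1 = σ (ι h) := by rw [hσ'val, if_pos hc]
        rcases m with _ | m'
        · rw [Function.iterate_zero_apply, hc] at hab
          exact absurd hab.symm b.2.2
        · rw [hc, Function.iterate_succ_apply] at hab
          obtain ⟨k, hk⟩ := IH2 m' (by omega) (σ' a) b (by rw [ha']; exact hab)
          exact ⟨k + 1, by rw [Function.iterate_succ_apply]; exact hk⟩
      · have ha' : (σ' a).1 = σ a.1 := by rw [hσ'val, if_neg hc]
        obtain ⟨k, hk⟩ := IH2 m (by omega) (σ' a) b (by rw [ha']; exact hab)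
        exact ⟨k + 1, by rw [Function.iterate_succ_apply]; exact hk⟩
  have hcyc' : ∀ a b : E', s' a = s' b → ∃ k, σ'^[k] a = b := by
    intro a b hs
    obtain ⟨m, hm⟩ := hcyc a.1 b.1 (congrArg Subtype.val hs)
    exact hskip m a b hm
  -- connectivity of the contracted graph
  let t : V → V' := fun p => if hp : p = v then ⟨s (ι h), hsιh⟩ else ⟨p, hp⟩
  have htval : ∀ p (hp : p ≠ v), t p = ⟨p, hp⟩ := fun p hp => dif_neg hp
  have htv : t v = ⟨s (ι h), hsιh⟩ := dif_pos rfl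
  have hproj : ∀ a u : V,
      Relation.ReflTransGen (fun x y => ∃ e, s e = x ∧ s (ι e) = y) a u →
      Relation.ReflTransGen (fun x y : V' => ∃ e' : E', s' e' = x ∧ s' (ι' e') = y)
        (t a) (t u) := by
    intro a u hau
    induction hau with
    | refl => exact .refl
    | @tail b c hab hstep ih =>
      obtain ⟨e, he1, he2⟩ := hstep
      by_cases hb : b = v
      · have he : e = h := hv e (hb ▸ he1)
        have hcv : c = s (ι h) := by rw [← he2, he]
        have hcne : c ≠ v := by rw [hcv]; exact hsιh
        have : t c = t b := by
          rw [htval c hcne, hb, htv]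
          exact Subtype.ext hcv
        rw [this]; exact ih
      · by_cases hcv : c = v
        · have he : ι e = h := hv _ (by rw [he2]; exact hcv)
          have hb' : b = s (ι h) := by rw [← he, hinv]; exact he1.symm
          have : t c = t b := by
            rw [hcv, htv, htval b hb]
            exact Subtype.ext hb'.symm
          rw [this]; exact ih
        · have heh : e ≠ h := fun hc => hb (by rw [← he1, hc, hsh])
          have heι : e ≠ ι h := fun hc => hcv (by rw [← he2, hc, hinv, hsh])
          refine ih.tail ⟨⟨e, heh, heι⟩, ?_, ?_⟩
          · rw [htval b hb]
            exact Subtype.ext he1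
          · rw [htval c hcv]
            exact Subtype.ext he2
  have hconn' : ∀ u w : V',
      Relation.ReflTransGen (fun x y : V' => ∃ e' : E', s' e' = x ∧ s' (ι' e') = y) u w := by
    intro u w
    have hp := hproj u.1 w.1 (hconn u.1 w.1)
    rw [htval u.1 u.2, htval w.1 w.2] at hp
    exact hp
  have htree' : Fintype.card E' = 2 * (Fintype.card V' - 1) := by omega
  -- apply the induction hypothesis
  have trans' := IH (Fintype.card V - 1) (by omega) V' E' s' ι' σ' hcardV' hinv' hfree'
    hσ'bij hfib' hcyc' hconn' htree'
  -- lift green walks from the contracted graph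
  have hgstep : ∀ a : E', ∃ k, (σ ∘ ι)^[k] a.1 = ((σ' ∘ ι') a).1 := by
    intro a
    have hval : ((σ' ∘ ι') a).1 = if σ (ι a.1) = ι h then σ (ι h) else σ (ι a.1) := by
      show (σ' (ι' a)).1 = _
      rw [hσ'val, hι'val]
    by_cases hc : σ (ι a.1) = ι h
    · refine ⟨3, ?_⟩
      have h1 : (σ ∘ ι) a.1 = ι h := hc
      have h2 : (σ ∘ ι) (ι h) = h := by show σ (ι (ι h)) = h; rw [hinv, hσh]
      rw [hval, if_pos hc, Function.iterate_succ_apply, h1, Function.iterate_succ_apply, h2,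
        Function.iterate_one]
      exact rfl
    · refine ⟨1, ?_⟩
      rw [hval, if_neg hc, Function.iterate_one]
      exact rfl
  have hlift : ∀ (m : ℕ) (a : E'), ∃ k, (σ ∘ ι)^[k] a.1 = ((σ' ∘ ι')^[m] a).1 := by
    intro m a
    induction m with
    | zero => exact ⟨0, rfl⟩
    | succ m ih =>
      obtain ⟨k₁, hk₁⟩ := ih
      obtain ⟨k₂, hk₂⟩ := hgstep ((σ' ∘ ι')^[m] a)
      refine ⟨k₂ + k₁, ?_⟩
      rw [Function.iterate_add_apply, hk₁, hk₂, Function.iterate_succ_apply']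
  -- entering and exiting the contracted edge set
  have h2 : (σ ∘ ι) (ι h) = h := by show σ (ι (ι h)) = h; rw [hinv, hσh]
  have hentry : ∀ e : E, ∃ (j : ℕ) (a : E'), (σ ∘ ι)^[j] e = a.1 := by
    intro e
    by_cases he1 : e = h
    · exact ⟨1, ⟨σ (ι h), hσιh_ne_h, hσιh_ne⟩, by rw [Function.iterate_one, he1]; exact rfl⟩
    · by_cases he2 : e = ι h
      · refine ⟨2, ⟨σ (ι h), hσιh_ne_h, hσιh_ne⟩, ?_⟩
        subst he2
        rw [Function.iterate_succ_apply, h2, Function.iterate_one]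
        exact rfl
      · exact ⟨0, ⟨e, he1, he2⟩, rfl⟩
  have hexit : ∀ e : E, ∃ (a : E') (j : ℕ), (σ ∘ ι)^[j] a.1 = e := by
    intro e
    have hσy : σ ((Equiv.ofBijective σ hσ).symm (ι h)) = ι h :=
      (Equiv.ofBijective σ hσ).apply_symm_apply (ι h)
    set y := (Equiv.ofBijective σ hσ).symm (ι h) with hy
    have hyh : y ≠ ι h := fun hc => hσιh_ne (hc ▸ hσy)
    have hyh2 : y ≠ h := by
      intro hc
      rw [hc, hσh] at hσy
      exact hhι hσy.symm
    have hb1 : ι y ≠ h := fun hc => hyh (by rw [← hinv y, hc])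
    have hb2 : ι y ≠ ι h := fun hc => hyh2 (hinv.injective hc)
    have hgb : (σ ∘ ι) (ι y) = ι h := by show σ (ι (ι y)) = ι h; rw [hinv]; exact hσy
    by_cases he1 : e = h
    · refine ⟨⟨ι y, hb1, hb2⟩, 2, ?_⟩
      subst he1
      rw [Function.iterate_succ_apply, hgb, Function.iterate_one, h2]
    · by_cases he2 : e = ι h
      · refine ⟨⟨ι y, hb1, hb2⟩, 1, ?_⟩
        subst he2
        rw [Function.iterate_one, hgb]
      · exact ⟨⟨e, he1, he2⟩, 0, rfl⟩
  obtain ⟨j₁, a, hja⟩ := hentry e₀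
  obtain ⟨b, j₂, hjb⟩ := hexit e₀'
  obtain ⟨m, hm⟩ := trans' a b
  obtain ⟨k, hk⟩ := hlift m a
  refine ⟨j₂ + (k + j₁), ?_⟩
  rw [Function.iterate_add_apply, Function.iterate_add_apply, hja, hk, hm, hjb]

/-- In a Brauer graph whose underlying graph is a tree with `n` edges (connected, with
`|E|/2 = |V| − 1` edges), every Green walk visits each half-edge: the Green walk
bijection `g = σ ∘ ι` acts transitively on the set of half-edges, so there is a unique
Green walk and it has period `2n = |E|`. -/
theorem brauer_tree_single_green_walk {V E : Type*} [Fintype V] [Fintype E]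
    (s : E → V) (ι σ : E → E)
    (hinv : Function.Involutive ι) (hfree : ∀ e, ι e ≠ e)
    (hσ : Function.Bijective σ)
    (hfib : ∀ e, s (σ e) = s e)
    (hcyc : ∀ e e', s e = s e' → ∃ n : ℕ, σ^[n] e = e')
    (hconn : ∀ u v : V,
      Relation.ReflTransGen (fun a b => ∃ e, s e = a ∧ s (ι e) = b) u v)
    (htree : Fintype.card E = 2 * (Fintype.card V - 1)) :
    (∀ e e' : E, ∃ k : ℕ, (σ ∘ ι)^[k] e = e') ∧
    (∀ e : E, Function.minimalPeriod (σ ∘ ι) e = Fintype.card E) := by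
  have htrans := green_aux (Fintype.card V) V E s ι σ rfl hinv hfree hσ hfib hcyc hconn htree
  refine ⟨htrans, ?_⟩
  intro e
  obtain ⟨k, hk⟩ := htrans ((σ ∘ ι) e) e
  have hper : Function.IsPeriodicPt (σ ∘ ι) (k + 1) e := by
    show (σ ∘ ι)^[k + 1] e = e
    rw [Function.iterate_succ_apply]
    exact hk
  have hpos : 0 < Function.minimalPeriod (σ ∘ ι) e := hper.minimalPeriod_pos k.succ_pos
  have hinj : Function.Injective
      (fun i : Fin (Function.minimalPeriod (σ ∘ ι) e) => (σ ∘ ι)^[i.1] e) := by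
    intro i j hij
    exact Fin.ext (Function.iterate_injOn_Iio_minimalPeriod i.2 j.2 hij)
  have hsurj : Function.Surjective
      (fun i : Fin (Function.minimalPeriod (σ ∘ ι) e) => (σ ∘ ι)^[i.1] e) := by
    intro e'
    obtain ⟨k', hk'⟩ := htrans e e'
    exact ⟨⟨k' % _, Nat.mod_lt _ hpos⟩, Function.iterate_mod_minimalPeriod_eq.trans hk'⟩
  have hcard := Fintype.card_of_bijective ⟨hinj, hsurj⟩
  rw [Fintype.card_fin] at hcard
  exact hcard
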